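/- Let k be a commutative ring, let q, η, λ be invertible elements of k satisfying η·λ·q^{r−1} = 1, let r ≥ 1 be an integer, and for 0 ≤ i ≤ r set α_i = (−1)^i · C(r,i)_q · q^{(i²+i)/2} · (q^{−1})^{r·i} · (η^{−1})^i. Then for all integers u ≥ 0 and v ≥ 0 with u + v < r: Σ_{i=u}^{r−v} α_i · C(i,u)_q · C(r−i,v)_q · λ^{r−i−v} · q^{u(r−i−v)} = 0. -/

import Mathlib

/-!
Write `i = u + j` and `N = r - u - v ≥ 1`. The q-trinomial identity
`C(r,i) C(i,u) C(r-i,v) = C(r,u) C(r-u,v) C(N,j)`, which follows from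
`C(n,i) (X;X)_i (X;X)_{n-i} = (X;X)_n` in the domain `ℤ[X]`, together with the hypothesis
`η λ q^(r-1) = 1` in the form `λ = η⁻¹ q (q⁻¹)^r`, turns the `i`-th summand into a constant
independent of `j` times `(-1)^j q^(j choose 2) C(N,j)`. These terms sum to zero: this is the
q-binomial theorem `∏_{t<N} (1 + q^t x) = ∑_j q^(j choose 2) C(N,j) x^j` at `x = -1`, and it
telescopes directly from the q-Pascal identity.
-/

/-- The Gaussian (q-binomial) coefficient as a polynomial in ℤ[q], defined by
`C(n,0) = 1`, `C(0,i+1) = 0` and the q-Pascal identity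
`C(n+1,h+1) = q^(h+1)·C(n,h+1) + C(n,h)`. -/
noncomputable def gaussBinom : ℕ → ℕ → Polynomial ℤ
  | 0, 0 => 1
  | 0, _ + 1 => 0
  | _ + 1, 0 => 1
  | n + 1, h + 1 => Polynomial.X ^ (h + 1) * gaussBinom n (h + 1) + gaussBinom n h

open Polynomial Finset

theorem gaussBinom_succ_succ (n h : ℕ) :
    gaussBinom (n + 1) (h + 1) = X ^ (h + 1) * gaussBinom n (h + 1) + gaussBinom n h :=
  rfl

@[simp]
theorem gaussBinom_zero_right : ∀ n, gaussBinom n 0 = 1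
  | 0 | _ + 1 => rfl

theorem gaussBinom_eq_zero_of_lt : ∀ {n i}, n < i → gaussBinom n i = 0
  | 0, _ + 1, _ => rfl
  | n + 1, i + 1, h => by
    rw [gaussBinom_succ_succ, gaussBinom_eq_zero_of_lt (by omega : n < i + 1),
      gaussBinom_eq_zero_of_lt (by omega : n < i)]
    ring

@[simp]
theorem gaussBinom_self : ∀ n, gaussBinom n n = 1
  | 0 => rfl
  | n + 1 => by
    rw [gaussBinom_succ_succ, gaussBinom_eq_zero_of_lt n.lt_succ_self, gaussBinom_self n]
    ring

noncomputable def qPochhammer (n : ℕ) : ℤ[X] := ∏ t ∈ range n, (1 - X ^ (t + 1))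

theorem qPochhammer_succ (n : ℕ) : qPochhammer (n + 1) = qPochhammer n * (1 - X ^ (n + 1)) :=
  prod_range_succ _ _

theorem qPochhammer_ne_zero (n : ℕ) : qPochhammer n ≠ 0 :=
  prod_ne_zero_iff.2 fun t _ h => by simpa using congrArg (eval 0) h

theorem gaussBinom_mul_qPochhammer : ∀ {n i}, i ≤ n →
    gaussBinom n i * (qPochhammer i * qPochhammer (n - i)) = qPochhammer n
  | n, 0, _ => by simp [qPochhammer]
  | n + 1, i + 1, h => by
    rw [gaussBinom_succ_succ, Nat.add_sub_add_right]
    obtain rfl | hi := (Nat.le_of_lt_succ h).eq_or_lt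
    · simp [gaussBinom_eq_zero_of_lt i.lt_succ_self, qPochhammer]
    obtain ⟨m, hm⟩ : ∃ m, n - i = m + 1 := ⟨n - (i + 1), by omega⟩
    have h₁ := gaussBinom_mul_qPochhammer (n := n) (i := i + 1) hi
    have h₂ := gaussBinom_mul_qPochhammer (n := n) (i := i) hi.le
    rw [show n - (i + 1) = m by omega] at h₁
    rw [hm] at h₂ ⊢
    simp only [qPochhammer_succ] at h₁ h₂ ⊢
    have hX : (X : ℤ[X]) ^ (i + 1) * X ^ (m + 1) = X ^ (n + 1) := by
      rw [← pow_add]; congr 1; omega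
    linear_combination (X ^ (i + 1) * (1 - X ^ (m + 1))) * h₁ + (1 - X ^ (i + 1)) * h₂ -
      qPochhammer n * hX

theorem gaussBinom_trinomial {r i u v : ℕ} (hu : u ≤ i) (hv : i + v ≤ r) :
    gaussBinom r i * gaussBinom i u * gaussBinom (r - i) v =
      gaussBinom r u * gaussBinom (r - u) v * gaussBinom (r - u - v) (i - u) := by
  have hD : qPochhammer u * qPochhammer v * qPochhammer (i - u) * qPochhammer (r - i - v) ≠ 0 :=
    by simp [qPochhammer_ne_zero]
  refine mul_right_cancel₀ hD (.trans ?_ (Eq.symm ?_) (b := qPochhammer r))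
  · calc _ = gaussBinom r i * (gaussBinom i u * (qPochhammer u * qPochhammer (i - u))) *
          (gaussBinom (r - i) v * (qPochhammer v * qPochhammer (r - i - v))) := by ring
      _ = qPochhammer r := by
        rw [gaussBinom_mul_qPochhammer hu, gaussBinom_mul_qPochhammer (by omega), mul_assoc,
          gaussBinom_mul_qPochhammer (by omega)]
  · calc _ = gaussBinom r u * (qPochhammer u * (gaussBinom (r - u) v * (qPochhammer v *
          (gaussBinom (r - u - v) (i - u) * (qPochhammer (i - u) *
            qPochhammer (r - u - v - (i - u))))))) := by
          rw [show r - u - v - (i - u) = r - i - v by omega]; ring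
      _ = qPochhammer r := by
        rw [gaussBinom_mul_qPochhammer (by omega), gaussBinom_mul_qPochhammer (by omega),
          gaussBinom_mul_qPochhammer (by omega)]

theorem aeval_gaussBinom_alternating_sum {R : Type*} [CommRing R] (q : R) {n : ℕ} (hn : n ≠ 0) :
    ∑ j ∈ range (n + 1), (-1) ^ j * q ^ j.choose 2 * aeval q (gaussBinom n j) = 0 := by
  obtain ⟨n, rfl⟩ := Nat.exists_eq_succ_of_ne_zero hn
  set g : ℕ → R := fun j => (-1) ^ j * q ^ (j + 1).choose 2 * aeval q (gaussBinom n j)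
  have telescope (j : ℕ) : (-1) ^ (j + 1) * q ^ (j + 1).choose 2 *
      aeval q (gaussBinom (n + 1) (j + 1)) = g (j + 1) - g j := by
    have hchoose : (j + 1 + 1).choose 2 = (j + 1).choose 2 + (j + 1) := by
      rw [Nat.choose_succ_succ, Nat.choose_one_right, add_comm]
    simp only [g, gaussBinom_succ_succ, map_add, map_mul, map_pow, aeval_X, hchoose]
    ring
  rw [sum_range_succ', sum_congr rfl fun j _ => telescope j, sum_range_sub]
  simp [g, gaussBinom_eq_zero_of_lt n.lt_succ_self]

theorem add_sq_add_self_div_two (u j : ℕ) :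
    ((u + j) ^ 2 + (u + j)) / 2 = (u ^ 2 + u) / 2 + u * j + j + j.choose 2 := by
  have hj : j ^ 2 + j = (j.choose 2 + j) * 2 := by
    have := Nat.add_one_mul_choose_eq j 1
    rw [Nat.choose_one_right, Nat.choose_succ_succ, Nat.choose_one_right] at this
    linarith
  have hu : u ^ 2 + u = (u + 1).choose 2 * 2 := by
    rw [← Nat.add_one_mul_choose_eq, Nat.choose_one_right]; ring
  have hsq : (u + j) ^ 2 + (u + j) = u ^ 2 + u + 2 * (u * j) + (j ^ 2 + j) := by ring
  omega

theorem summand_eq_mul_alternating_term {k : Type*} [CommRing k] (q p e lam : k) {r u v j : ℕ}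
    (hlam : lam = e * q * p ^ r) (hj : u + j + v ≤ r) :
    ((-1) ^ (u + j) * aeval q (gaussBinom r (u + j)) * q ^ (((u + j) ^ 2 + (u + j)) / 2) *
          p ^ (r * (u + j)) * e ^ (u + j)) *
        aeval q (gaussBinom (u + j) u) * aeval q (gaussBinom (r - (u + j)) v) *
        lam ^ (r - (u + j) - v) * q ^ (u * (r - (u + j) - v)) =
      ((-1) ^ u * aeval q (gaussBinom r u) * aeval q (gaussBinom (r - u) v) *
          q ^ ((u ^ 2 + u) / 2) * p ^ (r * u) * e ^ u * lam ^ (r - u - v) * q ^ (u * (r - u - v))) *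
        ((-1) ^ j * q ^ j.choose 2 * aeval q (gaussBinom (r - u - v) j)) := by
  have htri := congrArg (aeval q) (gaussBinom_trinomial (Nat.le_add_right u j) hj)
  simp only [map_mul, Nat.add_sub_cancel_left] at htri
  obtain ⟨m, hm⟩ : ∃ m, r - (u + j) - v = m := ⟨_, rfl⟩
  rw [show r - u - v = j + m by omega] at htri ⊢
  rw [hm, add_sq_add_self_div_two, hlam]
  linear_combination ((-1) ^ (u + j) * q ^ ((u ^ 2 + u) / 2 + u * j + j + j.choose 2) *
    p ^ (r * (u + j)) * e ^ (u + j) * (e * q * p ^ r) ^ m * q ^ (u * m)) * htri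

theorem equations_A10b_general {k : Type*} [CommRing k] (q η lam : kˣ) (r : ℕ)
    (hA9 : η * lam * q ^ (r - 1) = 1) :
    ∀ u v : ℕ, u + v < r →
      ∑ i ∈ Finset.Icc u (r - v),
        ((-1 : k) ^ i * Polynomial.aeval (q : k) (gaussBinom r i) *
            (q : k) ^ ((i ^ 2 + i) / 2) * ((q⁻¹ : kˣ) : k) ^ (r * i) *
            ((η⁻¹ : kˣ) : k) ^ i) *
          Polynomial.aeval (q : k) (gaussBinom i u) *
          Polynomial.aeval (q : k) (gaussBinom (r - i) v) *
          (lam : k) ^ (r - i - v) * (q : k) ^ (u * (r - i - v)) = 0 := by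
  intro u v huv
  have hlam : lam = η⁻¹ * q * q⁻¹ ^ r := by
    obtain ⟨s, rfl⟩ : ∃ s, r = s + 1 := ⟨r - 1, by omega⟩
    rw [inv_pow, pow_succ, mul_assoc, mul_inv_rev, mul_inv_cancel_left, ← mul_inv,
      eq_inv_iff_mul_eq_one, mul_left_comm, ← mul_assoc, ← hA9, Nat.add_sub_cancel]
  have hlam' : (lam : k) = ((η⁻¹ : kˣ) : k) * q * ((q⁻¹ : kˣ) : k) ^ r := by
    rw [hlam, Units.val_mul, Units.val_mul, Units.val_pow_eq_pow_val]
  rw [← Ico_add_one_right_eq_Icc, sum_Ico_eq_sum_range,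
    show r - v + 1 - u = r - u - v + 1 by omega,
    sum_congr rfl fun j hj =>
      summand_eq_mul_alternating_term _ _ _ _ hlam' (by rw [mem_range] at hj; omega),
    ← mul_sum, aeval_gaussBinom_alternating_sum _ (by omega), mul_zero]

/-- equations (A.10b): under condition (A.9), the coefficients of
`(ad_c x)^r y` satisfy the second family of equations making it primitive. -/
theorem equations_A10b {k : Type*} [CommRing k] (q η lam : kˣ) (r : ℕ) (hr : 1 ≤ r)
    (hA9 : η * lam * q ^ (r - 1) = 1) :
    ∀ u v : ℕ, u + v < r →
      ∑ i ∈ Finset.Icc u (r - v),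
        ((-1 : k) ^ i * Polynomial.aeval (q : k) (gaussBinom r i) *
            (q : k) ^ ((i ^ 2 + i) / 2) * ((q⁻¹ : kˣ) : k) ^ (r * i) *
            ((η⁻¹ : kˣ) : k) ^ i) *
          Polynomial.aeval (q : k) (gaussBinom i u) *
          Polynomial.aeval (q : k) (gaussBinom (r - i) v) *
          (lam : k) ^ (r - i - v) * (q : k) ^ (u * (r - i - v)) = 0 :=
  equations_A10b_general q η lam r hA9
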